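/- arXiv:1608.04612 — 2 statements merged into one kernel-verified Lean document; each statement's English description precedes it below -/
import Mathlib

section
/- Let Ω ⊆ ℝⁿ be open and let f : ℝⁿ → ℝⁿ be continuously differentiable on Ω with det(Df(x)) > 0 for every x ∈ Ω. If there exist distinct points x₁, x₂ ∈ Ω with f(x₁) = f(x₂), then there exists a nonempty open set U ⊆ f(Ω) such that every point y ∈ U has at least two preimages in Ω, i.e. the set {x ∈ Ω | f(x) = y} has at least two elements. -/
open MeasureTheory

private lemma map_nhds_aux {n : ℕ} (Ω : Set (EuclideanSpace ℝ (Fin n)))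
    (f : EuclideanSpace ℝ (Fin n) → EuclideanSpace ℝ (Fin n))
    (hopen : IsOpen Ω) (hC1 : ContDiffOn ℝ 1 f Ω)
    (hdet : ∀ x ∈ Ω, 0 < (fderiv ℝ f x).det)
    {x : EuclideanSpace ℝ (Fin n)} (hx : x ∈ Ω) :
    Filter.map f (nhds x) = nhds (f x) := by
  have hca : ContDiffAt ℝ 1 f x := (hC1.contDiffAt (hopen.mem_nhds hx))
  have hstrict : HasStrictFDerivAt f (fderiv ℝ f x) x :=
    hca.hasStrictFDerivAt one_ne_zero
  have hdetne : LinearMap.det (fderiv ℝ f x : EuclideanSpace ℝ (Fin n) →ₗ[ℝ]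
      EuclideanSpace ℝ (Fin n)) ≠ 0 := ne_of_gt (hdet x hx)
  let e := LinearMap.equivOfDetNeZero _ hdetne
  let e' : EuclideanSpace ℝ (Fin n) ≃L[ℝ] EuclideanSpace ℝ (Fin n) :=
    e.toContinuousLinearEquiv
  have hcoe : (e' : EuclideanSpace ℝ (Fin n) →L[ℝ] EuclideanSpace ℝ (Fin n))
      = fderiv ℝ f x := by
    ext v
    rfl
  have hstrict' : HasStrictFDerivAt f
      (e' : EuclideanSpace ℝ (Fin n) →L[ℝ] EuclideanSpace ℝ (Fin n)) x := by
    rw [hcoe]; exact hstrict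
  exact hstrict'.map_nhds_eq_of_equiv

/-- Key step in the injectivity theorem (Section 2): if a `C¹` map with positive Jacobian
on an open set `Ω ⊆ ℝⁿ` fails to be injective, then there is a nonempty open subset of the
image all of whose points have at least two preimages in `Ω`. -/
theorem exists_open_multiplicity_two_of_not_injOn
    {n : ℕ} (Ω : Set (EuclideanSpace ℝ (Fin n)))
    (f : EuclideanSpace ℝ (Fin n) → EuclideanSpace ℝ (Fin n))
    (hopen : IsOpen Ω)
    (hC1 : ContDiffOn ℝ 1 f Ω)
    (hdet : ∀ x ∈ Ω, 0 < (fderiv ℝ f x).det)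
    (x₁ x₂ : EuclideanSpace ℝ (Fin n)) (hx₁ : x₁ ∈ Ω) (hx₂ : x₂ ∈ Ω)
    (hne : x₁ ≠ x₂) (hfx : f x₁ = f x₂) :
    ∃ U : Set (EuclideanSpace ℝ (Fin n)), U.Nonempty ∧ IsOpen U ∧ U ⊆ f '' Ω ∧
      ∀ y ∈ U, 2 ≤ ({x ∈ Ω | f x = y}).encard := by
  -- disjoint open neighborhoods inside Ω
  obtain ⟨W₁, W₂, hW₁o, hW₂o, hx₁W, hx₂W, hWd⟩ := t2_separation hne
  set V₁ := W₁ ∩ Ω with hV₁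
  set V₂ := W₂ ∩ Ω with hV₂
  have hV₁o : IsOpen V₁ := hW₁o.inter hopen
  have hV₂o : IsOpen V₂ := hW₂o.inter hopen
  have hx₁V : x₁ ∈ V₁ := ⟨hx₁W, hx₁⟩
  have hx₂V : x₂ ∈ V₂ := ⟨hx₂W, hx₂⟩
  have hmap₁ := map_nhds_aux Ω f hopen hC1 hdet hx₁
  have hmap₂ := map_nhds_aux Ω f hopen hC1 hdet hx₂
  have h₁ : f '' V₁ ∈ nhds (f x₁) := by
    rw [← hmap₁]
    exact Filter.image_mem_map (hV₁o.mem_nhds hx₁V)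
  have h₂ : f '' V₂ ∈ nhds (f x₁) := by
    rw [hfx, ← hmap₂]
    exact Filter.image_mem_map (hV₂o.mem_nhds hx₂V)
  refine ⟨interior (f '' V₁ ∩ f '' V₂), ⟨f x₁, mem_interior_iff_mem_nhds.2
    (Filter.inter_mem h₁ h₂)⟩, isOpen_interior, ?_, ?_⟩
  · intro y hy
    obtain ⟨a, ha, hay⟩ := (interior_subset hy).1
    exact ⟨a, ha.2, hay⟩
  · intro y hy
    obtain ⟨⟨a₁, ha₁, ha₁y⟩, ⟨a₂, ha₂, ha₂y⟩⟩ := interior_subset hy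
    have hane : a₁ ≠ a₂ := fun h => Set.disjoint_left.1 hWd ha₁.1 (h ▸ ha₂.1)
    have hsub : ({a₁, a₂} : Set _) ⊆ {x ∈ Ω | f x = y} := by
      rintro z (rfl | rfl)
      exacts [⟨ha₁.2, ha₁y⟩, ⟨ha₂.2, ha₂y⟩]
    calc (2 : ℕ∞) = ({a₁, a₂} : Set _).encard := (Set.encard_pair hane).symm
      _ ≤ _ := Set.encard_mono hsub
end

section
/- Let Ω ⊆ ℝⁿ be open and let f : ℝⁿ → ℝⁿ be continuously differentiable on Ω. Then the area formula with multiplicity holds: ∫_Ω |det(Df(x))| dx = ∫_{ℝⁿ} N(y) dy, where N(y) denotes the (extended-natural-number) cardinality of the preimage set {x ∈ Ω | f(x) = y}, both integrals being taken in the Lebesgue sense with values in [0, ∞]. -/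
open MeasureTheory Set
open scoped ENNReal

/-- Cast-to-`ℝ≥0∞` cardinality of a countable disjoint union is the sum of the cardinalities. -/
lemma encard_iUnion_cast_aux {α : Type*} {t : ℕ → Set α} (h : Pairwise (Function.onFun Disjoint t)) :
    ((⋃ i, t i).encard : ℝ≥0∞) = ∑' i, ((t i).encard : ℝ≥0∞) := by
  calc ((⋃ i, t i).encard : ℝ≥0∞) = ∑' (_ : ↥(⋃ i, t i)), (1 : ℝ≥0∞) :=
        (ENNReal.tsum_set_one _).symm
    _ = ∑' (_ : Σ i, ↥(t i)), (1 : ℝ≥0∞) :=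
        (Set.unionEqSigmaOfDisjoint h).tsum_eq (fun _ => (1 : ℝ≥0∞))
    _ = ∑' i, ∑' (_ : ↥(t i)), (1 : ℝ≥0∞) :=
        (ENNReal.tsum_sigma (β := fun i => ↥(t i)) (fun _ _ => (1 : ℝ≥0∞)))
    _ = ∑' i, ((t i).encard : ℝ≥0∞) := by simp

/-- Around each point where the derivative of a `C¹` map is invertible, there is an open
neighborhood on which the map is injective. -/
lemma exists_open_injOn_of_det_ne_zero {n : ℕ} {Ω : Set (EuclideanSpace ℝ (Fin n))}
    {f : EuclideanSpace ℝ (Fin n) → EuclideanSpace ℝ (Fin n)}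
    (hopen : IsOpen Ω) (hC1 : ContDiffOn ℝ 1 f Ω) {x : EuclideanSpace ℝ (Fin n)}
    (hx : x ∈ Ω) (hdet : (fderiv ℝ f x).det ≠ 0) :
    ∃ U : Set (EuclideanSpace ℝ (Fin n)), IsOpen U ∧ x ∈ U ∧ Set.InjOn f U := by
  have hca : ContDiffAt ℝ 1 f x := hC1.contDiffAt (hopen.mem_nhds hx)
  have hsd : HasStrictFDerivAt f (fderiv ℝ f x) x := hca.hasStrictFDerivAt one_ne_zero
  set A := fderiv ℝ f x with hA
  have hdet' : LinearMap.det (A : EuclideanSpace ℝ (Fin n) →ₗ[ℝ]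
      EuclideanSpace ℝ (Fin n)) ≠ 0 := hdet
  let e₀ := LinearMap.equivOfDetNeZero
    (A : EuclideanSpace ℝ (Fin n) →ₗ[ℝ] EuclideanSpace ℝ (Fin n)) hdet'
  let e : EuclideanSpace ℝ (Fin n) ≃L[ℝ] EuclideanSpace ℝ (Fin n) := e₀.toContinuousLinearEquiv
  have hcoe : (e : EuclideanSpace ℝ (Fin n) →L[ℝ] EuclideanSpace ℝ (Fin n)) = A := by
    ext v
    simp [e, e₀]
  have hsd' : HasStrictFDerivAt f
      (e : EuclideanSpace ℝ (Fin n) →L[ℝ] EuclideanSpace ℝ (Fin n)) x := by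
    rw [hcoe]; exact hsd
  refine ⟨(hsd'.toOpenPartialHomeomorph f).source, (hsd'.toOpenPartialHomeomorph f).open_source,
    hsd'.mem_toOpenPartialHomeomorph_source, ?_⟩
  have := (hsd'.toOpenPartialHomeomorph f).injOn
  rwa [hsd'.toOpenPartialHomeomorph_coe] at this

/-- Area formula with multiplicity (the analytic fact behind the injectivity theorem of
Section 2): for a `C¹` map `f` on an open set `Ω ⊆ ℝⁿ`,
`∫_Ω |det Df| = ∫_{ℝⁿ} N(y) dy`, where `N(y)` is the number of preimages of `y` in `Ω`. -/
theorem area_formula_with_multiplicity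
    {n : ℕ} (Ω : Set (EuclideanSpace ℝ (Fin n)))
    (f : EuclideanSpace ℝ (Fin n) → EuclideanSpace ℝ (Fin n))
    (hopen : IsOpen Ω)
    (hC1 : ContDiffOn ℝ 1 f Ω) :
    ∫⁻ x in Ω, ENNReal.ofReal |(fderiv ℝ f x).det| ∂volume
      = ∫⁻ y, (({x ∈ Ω | f x = y}).encard : ℝ≥0∞) ∂volume := by
  -- differentiability facts
  have hdiff : ∀ x ∈ Ω, HasFDerivAt f (fderiv ℝ f x) x := fun x hx =>
    ((hC1.contDiffAt (hopen.mem_nhds hx)).differentiableAt one_ne_zero).hasFDerivAt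
  -- the critical set
  set Z : Set (EuclideanSpace ℝ (Fin n)) := {x ∈ Ω | (fderiv ℝ f x).det = 0} with hZdef
  have hZΩ : Z ⊆ Ω := fun x hx => hx.1
  -- `Ω \ Z` is open
  have hopen' : IsOpen (Ω \ Z) := by
    have hcont : ContinuousOn (fun x => (fderiv ℝ f x).det) Ω :=
      ContinuousLinearMap.continuous_det.comp_continuousOn
        (hC1.continuousOn_fderiv_of_isOpen hopen le_rfl)
    have : Ω \ Z = Ω ∩ (fun x => (fderiv ℝ f x).det) ⁻¹' ({0}ᶜ) := by
      ext x
      simp only [hZdef, mem_diff, mem_inter_iff, mem_preimage, mem_compl_iff,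
        mem_singleton_iff, mem_setOf_eq]
      tauto
    rw [this]
    exact hcont.isOpen_inter_preimage hopen isOpen_compl_singleton
  -- image of the critical set is null (Sard)
  have hZimg : volume (f '' Z) = 0 := by
    apply addHaar_image_eq_zero_of_det_fderivWithin_eq_zero volume
      (f' := fderiv ℝ f)
    · exact fun x hx => (hdiff x (hZΩ hx)).hasFDerivWithinAt
    · exact fun x hx => hx.2
  -- countable cover of `Ω \ Z` by open sets of injectivity
  obtain ⟨T, hTmeas, hTdisj, hTunion, hTinj, hTsub⟩ :
      ∃ T : ℕ → Set (EuclideanSpace ℝ (Fin n)), (∀ k, MeasurableSet (T k)) ∧ Pairwise (Function.onFun Disjoint T) ∧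
        (⋃ k, T k) = Ω \ Z ∧ (∀ k, Set.InjOn f (T k)) ∧ ∀ k, T k ⊆ Ω \ Z := by
    have hU : ∀ x : ↥(Ω \ Z), ∃ U : Set (EuclideanSpace ℝ (Fin n)), IsOpen U ∧ (x : EuclideanSpace ℝ (Fin n)) ∈ U ∧ Set.InjOn f U ∧
        U ⊆ Ω \ Z := by
      rintro ⟨x, hx⟩
      obtain ⟨U, hUo, hxU, hUinj⟩ :=
        exists_open_injOn_of_det_ne_zero hopen hC1 hx.1 (by
          intro h; exact hx.2 ⟨hx.1, h⟩)
      exact ⟨U ∩ (Ω \ Z), hUo.inter hopen', ⟨hxU, hx⟩,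
        hUinj.mono inter_subset_left, inter_subset_right⟩
    choose U hUo hxU hUinj hUsub using hU
    obtain ⟨t, htc, htU⟩ := TopologicalSpace.isOpen_iUnion_countable U hUo
    have hcover : ⋃ i ∈ t, U i = Ω \ Z := by
      rw [htU]
      apply Subset.antisymm
      · exact iUnion_subset fun i => hUsub i
      · intro x hx
        exact mem_iUnion.2 ⟨⟨x, hx⟩, hxU ⟨x, hx⟩⟩
    rcases Set.eq_empty_or_nonempty (Ω \ Z) with hemp | hne
    · refine ⟨fun _ => ∅, by simp, by simp [Pairwise, Function.onFun], by simp [hemp],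
        by simp [Set.InjOn], by simp⟩
    · have htne : t.Nonempty := by
        by_contra h
        rw [Set.not_nonempty_iff_eq_empty] at h
        rw [h] at hcover
        simp only [mem_empty_iff_false, iUnion_of_empty, iUnion_empty] at hcover
        exact hne.ne_empty hcover.symm
      obtain ⟨g, hg⟩ := htc.exists_eq_range htne
      set u : ℕ → Set (EuclideanSpace ℝ (Fin n)) := fun k => U (g k) with hu
      have huU : ⋃ k, u k = Ω \ Z := by
        rw [← hcover, hg]
        rw [biUnion_range]
      refine ⟨disjointed u, fun k => MeasurableSet.disjointed
          (fun i => (hUo (g i)).measurableSet) k, disjoint_disjointed u,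
        by rw [iUnion_disjointed, huU], fun k => (hUinj (g k)).mono (disjointed_subset u k),
        fun k => (disjointed_subset u k).trans (hUsub (g k))⟩
  have hTfderiv : ∀ k, ∀ x ∈ T k, HasFDerivWithinAt f (fderiv ℝ f x) (T k) x :=
    fun k x hx => (hdiff x ((hTsub k hx).1)).hasFDerivWithinAt
  have himg_meas : ∀ k, MeasurableSet (f '' T k) := fun k =>
    measurable_image_of_fderivWithin (hTmeas k) (hTfderiv k) (hTinj k)
  -- LHS computation
  have hZmeas : MeasurableSet Z := by
    have : Z = Ω \ (Ω \ Z) := by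
      apply Subset.antisymm
      · intro x hx; exact ⟨hx.1, fun h => h.2 hx⟩
      · intro x hx
        by_contra h
        exact hx.2 ⟨hx.1, h⟩
    rw [this]
    exact hopen.measurableSet.diff hopen'.measurableSet
  have hLHS : ∫⁻ x in Ω, ENNReal.ofReal |(fderiv ℝ f x).det| ∂volume
      = ∑' k, volume (f '' T k) := by
    have hsplit : Ω = (Ω \ Z) ∪ Z := (Set.diff_union_of_subset hZΩ).symm
    rw [hsplit, lintegral_union hZmeas disjoint_sdiff_left]
    have hZzero : ∫⁻ x in Z, ENNReal.ofReal |(fderiv ℝ f x).det| ∂volume = 0 := by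
      rw [setLIntegral_congr_fun_ae hZmeas (Filter.Eventually.of_forall
        (fun x hx => by simp [hx.2] :
          ∀ x ∈ Z, ENNReal.ofReal |(fderiv ℝ f x).det| = (fun _ => 0) x))]
      simp
    rw [hZzero, add_zero, ← hTunion, lintegral_iUnion hTmeas hTdisj]
    congr 1
    ext k
    exact lintegral_abs_det_fderiv_eq_addHaar_image volume (hTmeas k) (hTfderiv k) (hTinj k)
  -- RHS computation
  have hRHS : ∫⁻ y, (({x ∈ Ω | f x = y}).encard : ℝ≥0∞) ∂volume
      = ∑' k, volume (f '' T k) := by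
    have hae : ∀ᵐ y ∂volume, (({x ∈ Ω | f x = y}).encard : ℝ≥0∞)
        = ∑' k, (f '' T k).indicator (fun _ => (1 : ℝ≥0∞)) y := by
      filter_upwards [measure_eq_zero_iff_ae_notMem.mp hZimg] with y hy
      have hset : {x ∈ Ω | f x = y} = ⋃ k, {x ∈ T k | f x = y} := by
        apply Subset.antisymm
        · intro x hx
          have hxZ : x ∉ Z := fun hxZ => hy ⟨x, hxZ, hx.2⟩
          have : x ∈ Ω \ Z := ⟨hx.1, hxZ⟩
          rw [← hTunion] at this
          obtain ⟨k, hk⟩ := mem_iUnion.mp this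
          exact mem_iUnion.2 ⟨k, hk, hx.2⟩
        · exact iUnion_subset fun k x hx => ⟨(hTsub k hx.1).1, hx.2⟩
      have hdisj' : Pairwise (Function.onFun Disjoint fun k => {x ∈ T k | f x = y}) :=
        fun i j hij => (hTdisj hij).mono (fun x hx => hx.1) (fun x hx => hx.1)
      rw [hset, encard_iUnion_cast_aux hdisj']
      congr 1
      ext k
      by_cases hk : y ∈ f '' T k
      · obtain ⟨x₀, hx₀, hfx₀⟩ := hk
        have : {x ∈ T k | f x = y} = {x₀} := by
          apply Subset.antisymm
          · intro x hx
            exact (hTinj k) hx.1 hx₀ (hx.2.trans hfx₀.symm)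
          · intro x hx
            rw [mem_singleton_iff] at hx
            subst hx
            exact ⟨hx₀, hfx₀⟩
        rw [this, Set.indicator_of_mem (show y ∈ f '' T k from ⟨x₀, hx₀, hfx₀⟩)
          (fun _ => (1 : ℝ≥0∞))]
        simp
      · have : {x ∈ T k | f x = y} = ∅ := by
          ext x
          simp only [mem_setOf_eq, mem_empty_iff_false, iff_false]
          rintro ⟨hx, rfl⟩
          exact hk ⟨x, hx, rfl⟩
        rw [this, Set.indicator_of_notMem hk (fun _ => (1 : ℝ≥0∞))]
        simp
    rw [lintegral_congr_ae hae, lintegral_tsum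
      (fun k => ((measurable_const.indicator (himg_meas k)).aemeasurable))]
    congr 1
    ext k
    exact lintegral_indicator_one (himg_meas k)
  rw [hLHS, hRHS]
end
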